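/- Let γ ∈ [0, 1/2), α ∈ (1/2, 1], M ≥ 0, C_g ≥ 0, C* ≥ 0, and let g : [0,1] → ℝ satisfy |g(s)| ≤ M and |g(s₁) − g(s₂)| ≤ C_g |s₁ − s₂|^α for all s, s₁, s₂ ∈ [0,1]. Let λ_{0,0} ∈ ℝ with |λ_{0,0}| ≤ C*, and let (λ_{j,k})_{j∈ℕ, 0 ≤ k ≤ 2^j−1} be real numbers with |λ_{j,k}| ≤ C* √(1 + j) for all j, k. For J ∈ ℕ and t ∈ [0,1], define S_J(t) = λ_{0,0} ∫₀^t g(s) φ_{0,0}(s) ds + Σ_{j=0}^{J} Σ_{k=0}^{2^j − 1} λ_{j,k} ∫₀^t g(s) ψ_{j,k}(s) ds. Then there exists a constant D > 0, depending only on M, C_g, C*, γ and α, such that for all J ∈ ℕ and all Q ∈ ℕ, Q ≥ 1, one has ‖S_{J+Q} − S_J‖_{C^γ([0,1])} ≤ D · 2^{−J min(1/2 − γ, α − 1/2)} √(1 + J). -/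

import Mathlib

/-!
The increment of `S_{J+Q} - S_J` over `[t₁, t₂]` is a sum over the levels `J < j ≤ J + Q` of
`∑ₖ λ_{j,k} ∫_{t₁}^{t₂} g ψ_{j,k}`. At level `j` only the two dyadic intervals containing `t₁`
and `t₂` are cut by `[t₁, t₂]`, and each contributes at most `M 2^{j/2} min(t₂ - t₁, 2^{-j})`.
The at most `2^j (t₂ - t₁)` dyadic intervals inside `[t₁, t₂]` contribute only through the
cancellation of the two halves of `ψ_{j,k}` against the `α`-Hölder oscillation of `g`, i.e.
`C_g 2^{j/2} 2^{-(j+1)(1+α)}` each. Both bounds are `≲ 2^{-jδ} (t₂ - t₁)^γ` with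
`δ = min(1/2 - γ, α - 1/2) > 0`, so with `|λ_{j,k}| ≤ C* √(1+j)` the geometric decay of
`√(1+j) 2^{-jδ}` over `j > J` gives the increment bound `≲ √(1+J) 2^{-Jδ} (t₂ - t₁)^γ`.
As `S_J(0) = 0`, this controls both parts of the Hölder norm.
-/

open MeasureTheory Set

/-- The Haar scaling function `φ_{J,l} = 2^{J/2} 𝟙_{[l/2^J,(l+1)/2^J)}`. -/
noncomputable def haarPhi (J l : ℕ) (s : ℝ) : ℝ :=
  2 ^ ((J : ℝ) / 2) *
    (Set.Ico ((l : ℝ) / 2 ^ J) (((l : ℝ) + 1) / 2 ^ J)).indicator 1 s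

/-- The Haar wavelet `ψ_{j,k} = 2^{j/2} (𝟙_{[k/2^j,(2k+1)/2^{j+1})} − 𝟙_{[(2k+1)/2^{j+1},(k+1)/2^j)})`. -/
noncomputable def haarPsi (j k : ℕ) (s : ℝ) : ℝ :=
  2 ^ ((j : ℝ) / 2) *
    ((Set.Ico ((k : ℝ) / 2 ^ j) ((2 * (k : ℝ) + 1) / 2 ^ (j + 1))).indicator 1 s -
      (Set.Ico ((2 * (k : ℝ) + 1) / 2 ^ (j + 1)) (((k : ℝ) + 1) / 2 ^ j)).indicator 1 s)

/-- The partial sum `S_J(t) = λ_{0,0} ∫₀^t g φ_{0,0} + Σ_{j=0}^{J} Σ_{k=0}^{2^j−1} λ_{j,k} ∫₀^t g ψ_{j,k}`. -/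
noncomputable def haarPartialSum (g : ℝ → ℝ) (lam00 : ℝ) (lam : ℕ → ℕ → ℝ)
    (J : ℕ) (t : ℝ) : ℝ :=
  lam00 * (∫ s in (0 : ℝ)..t, g s * haarPhi 0 0 s) +
    ∑ j ∈ Finset.range (J + 1), ∑ k ∈ Finset.range (2 ^ j),
      lam j k * ∫ s in (0 : ℝ)..t, g s * haarPsi j k s

/-- The Hölder norm `‖u‖_{C^γ([0,1])} = sup_{[0,1]} |u| + sup_{0 ≤ t₁ < t₂ ≤ 1} |u(t₁) − u(t₂)|/(t₂ − t₁)^γ`. -/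
noncomputable def holderNorm (γ : ℝ) (u : ℝ → ℝ) : ℝ :=
  sSup ((fun t => |u t|) '' Set.Icc (0 : ℝ) 1) +
    sSup {q : ℝ | ∃ t₁ t₂ : ℝ, 0 ≤ t₁ ∧ t₁ < t₂ ∧ t₂ ≤ 1 ∧
      q = |u t₁ - u t₂| / (t₂ - t₁) ^ γ}

open Filter Topology

lemma continuousOn_of_abs_sub_le_rpow {g : ℝ → ℝ} {s : Set ℝ} {C α : ℝ} (hα : 0 < α)
    (hg : ∀ x ∈ s, ∀ y ∈ s, |g x - g y| ≤ C * |x - y| ^ α) : ContinuousOn g s := by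
  intro a ha
  have hlim : Tendsto (fun x => C * |x - a| ^ α) (𝓝[s] a) (𝓝 0) := by
    have hc : Continuous fun x : ℝ => C * |x - a| ^ α :=
      continuous_const.mul
        ((continuous_id.sub continuous_const).abs.rpow_const fun _ => Or.inr hα.le)
    simpa [Real.zero_rpow hα.ne'] using (hc.tendsto a).mono_left nhdsWithin_le_nhds
  rw [ContinuousWithinAt, tendsto_iff_norm_sub_tendsto_zero]
  exact squeeze_zero' (Eventually.of_forall fun _ => norm_nonneg _)
    (eventually_mem_nhdsWithin.mono fun x hx => hg x hx a ha) hlim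

lemma min_le_rpow_mul_rpow {a b γ : ℝ} (ha : 0 ≤ a) (hb : 0 ≤ b) (hγ₀ : 0 ≤ γ) (hγ₁ : γ ≤ 1) :
    min a b ≤ a ^ γ * b ^ (1 - γ) := by
  have hm : 0 ≤ min a b := le_min ha hb
  calc min a b = min a b ^ γ * min a b ^ (1 - γ) := by
        rw [← Real.rpow_add' hm (by norm_num), add_sub_cancel, Real.rpow_one]
    _ ≤ a ^ γ * b ^ (1 - γ) :=
        mul_le_mul (Real.rpow_le_rpow hm (min_le_left a b) hγ₀)
          (Real.rpow_le_rpow hm (min_le_right a b) (by linarith))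
          (Real.rpow_nonneg hm _) (Real.rpow_nonneg ha _)

lemma rpow_half_mul_min_le {N Δ γ δ : ℝ} (hN : 1 ≤ N) (hΔ : 0 ≤ Δ) (hγ₀ : 0 ≤ γ) (hγ₁ : γ ≤ 1)
    (hδ : δ ≤ 1 / 2 - γ) :
    N ^ (1 / 2 : ℝ) * min Δ N⁻¹ ≤ N ^ (-δ) * Δ ^ γ := by
  have hN₀ : 0 < N := by linarith
  calc N ^ (1 / 2 : ℝ) * min Δ N⁻¹ ≤ N ^ (1 / 2 : ℝ) * (Δ ^ γ * N⁻¹ ^ (1 - γ)) :=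
        mul_le_mul_of_nonneg_left (min_le_rpow_mul_rpow hΔ (by positivity) hγ₀ hγ₁) (by positivity)
    _ = N ^ (γ - 1 / 2) * Δ ^ γ := by
        rw [Real.inv_rpow hN₀.le, ← Real.rpow_neg hN₀.le, mul_left_comm, ← Real.rpow_add hN₀]
        ring_nf
    _ ≤ N ^ (-δ) * Δ ^ γ := by gcongr; linarith

lemma mul_rpow_half_mul_le {N Δ C α γ δ : ℝ} (hN : 1 ≤ N) (hΔ₀ : 0 ≤ Δ) (hΔ₁ : Δ ≤ 1)
    (hC : 0 ≤ C) (hα : 0 ≤ α) (hγ : γ ≤ 1) (hδ : δ ≤ α - 1 / 2) :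
    N * Δ * (N ^ (1 / 2 : ℝ) * (C * (2 * N)⁻¹ ^ α * (2 * N)⁻¹)) ≤ C * N ^ (-δ) * Δ ^ γ := by
  have hN₀ : 0 < N := by linarith
  calc N * Δ * (N ^ (1 / 2 : ℝ) * (C * (2 * N)⁻¹ ^ α * (2 * N)⁻¹))
        = C * Δ * (N ^ (1 / 2 : ℝ) * (2 * N)⁻¹ ^ α) / 2 := by field_simp
    _ ≤ C * Δ * (N ^ (1 / 2 : ℝ) * N⁻¹ ^ α) := by
        refine (half_le_self (by positivity)).trans ?_
        gcongr
        linarith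
    _ = C * N ^ (1 / 2 - α) * Δ := by
        rw [Real.inv_rpow hN₀.le, ← Real.rpow_neg hN₀.le, ← Real.rpow_add hN₀]
        ring_nf
    _ ≤ C * N ^ (-δ) * Δ ^ γ := by
        gcongr
        · linarith
        · exact Real.self_le_rpow_of_le_one hΔ₀ hΔ₁ hγ

lemma Finset.sum_le_add_add_sum_Ioo {f : ℕ → ℝ} {s : Finset ℕ} {a b : ℕ} (hf : ∀ k, 0 ≤ f k)
    (hvanish : ∀ k ∈ s, k < a ∨ b < k → f k = 0) :
    ∑ k ∈ s, f k ≤ f a + f b + ∑ k ∈ Finset.Ioo a b, f k := by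
  calc ∑ k ∈ s, f k = ∑ k ∈ s with k ∈ Finset.Icc a b, f k := by
        refine (Finset.sum_filter_of_ne fun k hk hfk => ?_).symm
        by_contra hab
        rw [Finset.mem_Icc, not_and_or, not_le, not_le] at hab
        exact hfk (hvanish k hk hab)
    _ ≤ ∑ k ∈ Finset.Icc a b, f k :=
        Finset.sum_le_sum_of_subset_of_nonneg (fun k hk => (Finset.mem_filter.1 hk).2)
          fun k _ _ => hf k
    _ ≤ f a + f b + ∑ k ∈ Finset.Ioo a b, f k := by
        rcases lt_trichotomy a b with hab | rfl | hab
        · rw [Finset.Icc_eq_cons_Ioc hab.le, Finset.sum_cons, Finset.Ioc_eq_cons_Ioo hab,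
            Finset.sum_cons]
          linarith
        · simp [hf a]
        · rw [Finset.Icc_eq_empty_of_lt hab, Finset.sum_empty]
          have := Finset.sum_nonneg fun k (_ : k ∈ Finset.Ioo a b) => hf k
          linarith [hf a, hf b]

section HaarWavelet

variable {j k : ℕ} {s : ℝ}

lemma dyadic_mid_eq (j k : ℕ) :
    (2 * (k : ℝ) + 1) / 2 ^ (j + 1) = k / 2 ^ j + (2 ^ (j + 1))⁻¹ := by
  field_simp; ring

lemma dyadic_right_eq (j k : ℕ) :
    ((k : ℝ) + 1) / 2 ^ j = (2 * (k : ℝ) + 1) / 2 ^ (j + 1) + (2 ^ (j + 1))⁻¹ := by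
  field_simp; ring

lemma dyadic_left_le_mid (j k : ℕ) : (k : ℝ) / 2 ^ j ≤ (2 * (k : ℝ) + 1) / 2 ^ (j + 1) := by
  rw [dyadic_mid_eq]; exact le_add_of_nonneg_right (by positivity)

lemma dyadic_mid_le_right (j k : ℕ) : (2 * (k : ℝ) + 1) / 2 ^ (j + 1) ≤ ((k : ℝ) + 1) / 2 ^ j := by
  rw [dyadic_right_eq j k]; exact le_add_of_nonneg_right (by positivity)

lemma haarPsi_eq_zero_of_notMem (hs : s ∉ Ico ((k : ℝ) / 2 ^ j) (((k : ℝ) + 1) / 2 ^ j)) :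
    haarPsi j k s = 0 := by
  rw [haarPsi, indicator_of_notMem, indicator_of_notMem, sub_self, mul_zero]
  · exact fun h => hs (Ico_subset_Ico (dyadic_left_le_mid j k) le_rfl h)
  · exact fun h => hs (Ico_subset_Ico le_rfl (dyadic_mid_le_right j k) h)

lemma haarPsi_of_mem_left (hs : s ∈ Ico ((k : ℝ) / 2 ^ j) ((2 * (k : ℝ) + 1) / 2 ^ (j + 1))) :
    haarPsi j k s = 2 ^ ((j : ℝ) / 2) := by
  rw [haarPsi, indicator_of_mem hs, indicator_of_notMem fun h => (not_le.2 hs.2) h.1]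
  simp

lemma haarPsi_of_mem_right
    (hs : s ∈ Ico ((2 * (k : ℝ) + 1) / 2 ^ (j + 1)) (((k : ℝ) + 1) / 2 ^ j)) :
    haarPsi j k s = -2 ^ ((j : ℝ) / 2) := by
  rw [haarPsi, indicator_of_mem hs, indicator_of_notMem fun h => (not_le.2 h.2) hs.1]
  simp

lemma abs_haarPsi_le (j k : ℕ) (s : ℝ) : |haarPsi j k s| ≤ 2 ^ ((j : ℝ) / 2) := by
  by_cases h₁ : s ∈ Ico ((k : ℝ) / 2 ^ j) ((2 * (k : ℝ) + 1) / 2 ^ (j + 1))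
  · rw [haarPsi_of_mem_left h₁, abs_of_pos (by positivity)]
  by_cases h₂ : s ∈ Ico ((2 * (k : ℝ) + 1) / 2 ^ (j + 1)) (((k : ℝ) + 1) / 2 ^ j)
  · rw [haarPsi_of_mem_right h₂, abs_neg, abs_of_pos (by positivity)]
  rw [haarPsi, indicator_of_notMem h₁, indicator_of_notMem h₂]
  simp only [sub_self, mul_zero, abs_zero]; positivity

lemma measurable_haarPsi (j k : ℕ) : Measurable (haarPsi j k) :=
  ((measurable_one.indicator measurableSet_Ico).sub
    (measurable_one.indicator measurableSet_Ico)).const_mul _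

end HaarWavelet

section DyadicFloor

variable {t : ℝ} {j k : ℕ}

lemma dyadic_right_le_of_lt_floor (ht : 0 ≤ t) (hk : k < ⌊2 ^ j * t⌋₊) :
    ((k : ℝ) + 1) / 2 ^ j ≤ t := by
  have := (Nat.le_floor_iff (by positivity)).1 (Nat.succ_le_of_lt hk)
  rw [div_le_iff₀ (by positivity)]
  push_cast at this
  linarith

lemma lt_dyadic_left_of_floor_lt (ht : 0 ≤ t) (hk : ⌊2 ^ j * t⌋₊ < k) :
    t < (k : ℝ) / 2 ^ j := by
  have := (Nat.floor_lt (by positivity)).1 hk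
  rw [lt_div_iff₀ (by positivity)]
  linarith

lemma card_Ioo_floor_le {t₁ t₂ : ℝ} (ht₁ : 0 ≤ t₁) (h₁₂ : t₁ ≤ t₂) :
    ((Finset.Ioo ⌊2 ^ j * t₁⌋₊ ⌊2 ^ j * t₂⌋₊).card : ℝ) ≤ 2 ^ j * (t₂ - t₁) := by
  have h₁ := Nat.lt_floor_add_one ((2 : ℝ) ^ j * t₁)
  have h₂ := Nat.floor_le (a := (2 : ℝ) ^ j * t₂) (mul_nonneg (by positivity) (by linarith))
  rw [Nat.card_Ioo, Nat.sub_sub]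
  rcases le_or_gt (⌊2 ^ j * t₁⌋₊ + 1) ⌊2 ^ j * t₂⌋₊ with h | h
  · rw [Nat.cast_sub h]
    push_cast
    linarith
  · rw [Nat.sub_eq_zero_of_le h.le, Nat.cast_zero]
    exact mul_nonneg (by positivity) (by linarith)

end DyadicFloor

section HaarIntegrals

variable {g : ℝ → ℝ} {M C α t₁ t₂ : ℝ}

lemma intervalIntegrable_mul_haarPsi (hg : ContinuousOn g (Icc 0 1)) (j k : ℕ) {a b : ℝ}
    (ha : a ∈ Icc (0 : ℝ) 1) (hb : b ∈ Icc (0 : ℝ) 1) :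
    IntervalIntegrable (fun s => g s * haarPsi j k s) volume a b :=
  IntegrableOn.intervalIntegrable <| IntegrableOn.mono_set
    (hg.integrableOn_Icc.mul_bdd (measurable_haarPsi j k).aestronglyMeasurable
      (Eventually.of_forall fun s => (Real.norm_eq_abs _).trans_le (abs_haarPsi_le j k s)))
    (uIcc_subset_Icc ha hb)

lemma integral_mul_haarPsi_eq_zero {j k : ℕ} (h₁₂ : t₁ ≤ t₂)
    (h : t₂ ≤ (k : ℝ) / 2 ^ j ∨ ((k : ℝ) + 1) / 2 ^ j ≤ t₁) :
    ∫ s in t₁..t₂, g s * haarPsi j k s = 0 := by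
  rw [intervalIntegral.integral_congr_Ioo_of_le h₁₂ (g := fun _ => 0),
    intervalIntegral.integral_zero]
  intro x hx
  show g x * haarPsi j k x = 0
  rw [haarPsi_eq_zero_of_notMem, mul_zero]
  rintro ⟨hl, hr⟩
  rcases h with h | h <;> linarith [hx.1, hx.2]

lemma abs_integral_mul_haarPsi_le (hgb : ∀ s ∈ Icc (0 : ℝ) 1, |g s| ≤ M) (hM : 0 ≤ M)
    (j k : ℕ) (ht₁ : 0 ≤ t₁) (h₁₂ : t₁ ≤ t₂) (ht₂ : t₂ ≤ 1) :
    |∫ s in t₁..t₂, g s * haarPsi j k s| ≤ M * 2 ^ ((j : ℝ) / 2) * min (t₂ - t₁) (2 ^ j)⁻¹ := by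
  set I := Ico ((k : ℝ) / 2 ^ j) (((k : ℝ) + 1) / 2 ^ j)
  have hsupp : (fun s => g s * haarPsi j k s) = I.indicator fun s => g s * haarPsi j k s := by
    funext s
    by_cases hs : s ∈ I
    · rw [indicator_of_mem hs]
    · rw [indicator_of_notMem hs, haarPsi_eq_zero_of_notMem hs, mul_zero]
  have hvol : volume.real (Ioc t₁ t₂ ∩ I) ≤ min (t₂ - t₁) (2 ^ j)⁻¹ := by
    refine le_min ?_ ?_
    · exact (measureReal_mono inter_subset_left measure_Ioc_lt_top.ne).trans_eq
        (Real.volume_real_Ioc_of_le h₁₂)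
    · refine (measureReal_mono inter_subset_right measure_Ico_lt_top.ne).trans_eq ?_
      rw [Real.volume_real_Ico_of_le (by gcongr; linarith), ← sub_div, add_sub_cancel_left,
        one_div]
  rw [intervalIntegral.integral_of_le h₁₂, hsupp, setIntegral_indicator measurableSet_Ico,
    ← Real.norm_eq_abs]
  refine (norm_setIntegral_le_of_norm_le_const
    ((measure_mono inter_subset_left).trans_lt measure_Ioc_lt_top) fun s hs => ?_).trans
    (mul_le_mul_of_nonneg_left hvol (by positivity))
  have hs01 : s ∈ Icc (0 : ℝ) 1 := ⟨ht₁.trans hs.1.1.le, hs.1.2.trans ht₂⟩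
  rw [Real.norm_eq_abs, abs_mul]
  exact mul_le_mul (hgb s hs01) (abs_haarPsi_le j k s) (abs_nonneg _) hM

lemma integral_mul_haarPsi_eq_of_subset (hcont : ContinuousOn g (Icc 0 1)) {j k : ℕ}
    (ht₁ : 0 ≤ t₁) (hl : t₁ ≤ (k : ℝ) / 2 ^ j) (hr : ((k : ℝ) + 1) / 2 ^ j ≤ t₂) (ht₂ : t₂ ≤ 1) :
    ∫ s in t₁..t₂, g s * haarPsi j k s =
      ∫ s in (k : ℝ) / 2 ^ j..(2 * (k : ℝ) + 1) / 2 ^ (j + 1),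
        2 ^ ((j : ℝ) / 2) * (g s - g (s + (2 ^ (j + 1))⁻¹)) := by
  set l := (k : ℝ) / 2 ^ j
  set m := (2 * (k : ℝ) + 1) / 2 ^ (j + 1)
  set r := ((k : ℝ) + 1) / 2 ^ j
  set h : ℝ := (2 ^ (j + 1))⁻¹
  set F := fun s => g s * haarPsi j k s
  have hm : m = l + h := dyadic_mid_eq j k
  have hr' : r = m + h := dyadic_right_eq j k
  have hh : 0 < h := by positivity
  have hint : ∀ a ∈ Icc t₁ t₂, ∀ b ∈ Icc t₁ t₂, IntervalIntegrable F volume a b :=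
    fun a ha b hb => intervalIntegrable_mul_haarPsi hcont j k
      ⟨ht₁.trans ha.1, ha.2.trans ht₂⟩ ⟨ht₁.trans hb.1, hb.2.trans ht₂⟩
  have ht₁' : t₁ ∈ Icc t₁ t₂ := ⟨le_rfl, by linarith⟩
  have hl' : l ∈ Icc t₁ t₂ := ⟨hl, by linarith⟩
  have hm' : m ∈ Icc t₁ t₂ := ⟨by linarith, by linarith⟩
  have hr'' : r ∈ Icc t₁ t₂ := ⟨by linarith, hr⟩
  have ht₂' : t₂ ∈ Icc t₁ t₂ := ⟨by linarith, le_rfl⟩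
  have hshift : ∫ s in m..r, F s = ∫ s in l..m, F (s + h) := by
    rw [intervalIntegral.integral_comp_add_right, ← hm, ← hr']
  have hshift_int : IntervalIntegrable (fun s => F (s + h)) volume l m := by
    simpa [hm, hr'] using (hint m hm' r hr'').comp_add_right h
  rw [← intervalIntegral.integral_add_adjacent_intervals (hint t₁ ht₁' l hl')
      (hint l hl' t₂ ht₂'),
    integral_mul_haarPsi_eq_zero hl (Or.inl le_rfl), zero_add,
    ← intervalIntegral.integral_add_adjacent_intervals (hint l hl' r hr'')
      (hint r hr'' t₂ ht₂'),
    integral_mul_haarPsi_eq_zero hr (Or.inr le_rfl), add_zero,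
    ← intervalIntegral.integral_add_adjacent_intervals (hint l hl' m hm') (hint m hm' r hr''),
    hshift, ← intervalIntegral.integral_add (hint l hl' m hm') hshift_int]
  refine intervalIntegral.integral_congr_Ioo_of_le (by linarith) fun s hs => ?_
  simp only [F]
  rw [haarPsi_of_mem_left ⟨hs.1.le, hs.2⟩,
    haarPsi_of_mem_right (⟨by linarith [hs.1], by linarith [hs.2]⟩ : s + h ∈ Ico m r)]
  ring

lemma abs_integral_mul_haarPsi_le_of_subset (hcont : ContinuousOn g (Icc 0 1))
    (hg : ∀ x ∈ Icc (0 : ℝ) 1, ∀ y ∈ Icc (0 : ℝ) 1, |g x - g y| ≤ C * |x - y| ^ α)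
    {j k : ℕ} (ht₁ : 0 ≤ t₁) (hl : t₁ ≤ (k : ℝ) / 2 ^ j) (hr : ((k : ℝ) + 1) / 2 ^ j ≤ t₂)
    (ht₂ : t₂ ≤ 1) :
    |∫ s in t₁..t₂, g s * haarPsi j k s| ≤
      2 ^ ((j : ℝ) / 2) * (C * ((2 ^ (j + 1))⁻¹ : ℝ) ^ α * (2 ^ (j + 1))⁻¹) := by
  rw [integral_mul_haarPsi_eq_of_subset hcont ht₁ hl hr ht₂, ← Real.norm_eq_abs]
  set l := (k : ℝ) / 2 ^ j
  set m := (2 * (k : ℝ) + 1) / 2 ^ (j + 1)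
  set h : ℝ := (2 ^ (j + 1))⁻¹
  have hm : m = l + h := dyadic_mid_eq j k
  have hr' : ((k : ℝ) + 1) / 2 ^ j = m + h := dyadic_right_eq j k
  have hh : 0 < h := by positivity
  have hosc : ∀ s ∈ uIoc l m,
      ‖2 ^ ((j : ℝ) / 2) * (g s - g (s + h))‖ ≤ 2 ^ ((j : ℝ) / 2) * (C * h ^ α) := by
    intro s hs
    rw [uIoc_of_le (by linarith)] at hs
    have := hg s ⟨by linarith [hs.1], by linarith [hs.2]⟩ (s + h)
      ⟨by linarith [hs.1], by linarith [hs.2]⟩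
    rw [sub_add_cancel_left, abs_neg, abs_of_pos hh] at this
    rw [norm_mul, Real.norm_eq_abs, abs_of_pos (by positivity), Real.norm_eq_abs]
    exact mul_le_mul_of_nonneg_left this (by positivity)
  calc _ ≤ 2 ^ ((j : ℝ) / 2) * (C * h ^ α) * |m - l| :=
        intervalIntegral.norm_integral_le_of_norm_le_const hosc
    _ = _ := by rw [hm, add_sub_cancel_left, abs_of_pos hh]; ring

end HaarIntegrals

section LevelSum

variable {g : ℝ → ℝ} {M C α γ δ t₁ t₂ : ℝ}

lemma sum_abs_integral_mul_haarPsi_le_add (hcont : ContinuousOn g (Icc 0 1))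
    (hgb : ∀ s ∈ Icc (0 : ℝ) 1, |g s| ≤ M) (hM : 0 ≤ M)
    (hg : ∀ x ∈ Icc (0 : ℝ) 1, ∀ y ∈ Icc (0 : ℝ) 1, |g x - g y| ≤ C * |x - y| ^ α) (hC : 0 ≤ C)
    (j : ℕ) (ht₁ : 0 ≤ t₁) (h₁₂ : t₁ ≤ t₂) (ht₂ : t₂ ≤ 1) :
    ∑ k ∈ Finset.range (2 ^ j), |∫ s in t₁..t₂, g s * haarPsi j k s| ≤
      2 * (M * 2 ^ ((j : ℝ) / 2) * min (t₂ - t₁) (2 ^ j)⁻¹) +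
        2 ^ j * (t₂ - t₁) *
          (2 ^ ((j : ℝ) / 2) * (C * ((2 ^ (j + 1))⁻¹ : ℝ) ^ α * (2 ^ (j + 1))⁻¹)) := by
  have ht₂₀ : 0 ≤ t₂ := ht₁.trans h₁₂
  have hvanish : ∀ k ∈ Finset.range (2 ^ j), k < ⌊2 ^ j * t₁⌋₊ ∨ ⌊2 ^ j * t₂⌋₊ < k →
      |∫ s in t₁..t₂, g s * haarPsi j k s| = 0 := by
    rintro k - (hk | hk)
    · rw [integral_mul_haarPsi_eq_zero h₁₂ (Or.inr (dyadic_right_le_of_lt_floor ht₁ hk)),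
        abs_zero]
    · rw [integral_mul_haarPsi_eq_zero h₁₂ (Or.inl (lt_dyadic_left_of_floor_lt ht₂₀ hk).le),
        abs_zero]
  have hcut : ∀ k : ℕ, |∫ s in t₁..t₂, g s * haarPsi j k s| ≤
      M * 2 ^ ((j : ℝ) / 2) * min (t₂ - t₁) (2 ^ j)⁻¹ :=
    fun k => abs_integral_mul_haarPsi_le hgb hM j k ht₁ h₁₂ ht₂
  have hinside : ∀ k ∈ Finset.Ioo ⌊2 ^ j * t₁⌋₊ ⌊2 ^ j * t₂⌋₊,
      |∫ s in t₁..t₂, g s * haarPsi j k s| ≤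
        2 ^ ((j : ℝ) / 2) * (C * ((2 ^ (j + 1))⁻¹ : ℝ) ^ α * (2 ^ (j + 1))⁻¹) := by
    intro k hk
    rw [Finset.mem_Ioo] at hk
    exact abs_integral_mul_haarPsi_le_of_subset hcont hg ht₁
      (lt_dyadic_left_of_floor_lt ht₁ hk.1).le (dyadic_right_le_of_lt_floor ht₂₀ hk.2) ht₂
  refine (Finset.sum_le_add_add_sum_Ioo (fun k => abs_nonneg _) hvanish).trans
    (add_le_add (by linarith [hcut ⌊2 ^ j * t₁⌋₊, hcut ⌊2 ^ j * t₂⌋₊])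
      ((Finset.sum_le_card_nsmul _ _ _ hinside).trans ?_))
  rw [nsmul_eq_mul]
  gcongr
  exact card_Ioo_floor_le ht₁ h₁₂

lemma sum_abs_integral_mul_haarPsi_le (hcont : ContinuousOn g (Icc 0 1))
    (hgb : ∀ s ∈ Icc (0 : ℝ) 1, |g s| ≤ M) (hM : 0 ≤ M)
    (hg : ∀ x ∈ Icc (0 : ℝ) 1, ∀ y ∈ Icc (0 : ℝ) 1, |g x - g y| ≤ C * |x - y| ^ α) (hC : 0 ≤ C)
    (hα : 0 ≤ α) (hγ₀ : 0 ≤ γ) (hγ₁ : γ ≤ 1) (hδγ : δ ≤ 1 / 2 - γ) (hδα : δ ≤ α - 1 / 2)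
    (j : ℕ) (ht₁ : 0 ≤ t₁) (h₁₂ : t₁ ≤ t₂) (ht₂ : t₂ ≤ 1) :
    ∑ k ∈ Finset.range (2 ^ j), |∫ s in t₁..t₂, g s * haarPsi j k s| ≤
      (2 * M + C) * (t₂ - t₁) ^ γ * 2 ^ (-(j : ℝ) * δ) := by
  have hhalf : (2 : ℝ) ^ ((j : ℝ) / 2) = ((2 : ℝ) ^ j) ^ (1 / 2 : ℝ) := by
    rw [← Real.rpow_natCast, ← Real.rpow_mul zero_le_two]; ring_nf
  have hdecay : (2 : ℝ) ^ (-(j : ℝ) * δ) = ((2 : ℝ) ^ j) ^ (-δ) := by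
    rw [← Real.rpow_natCast, ← Real.rpow_mul zero_le_two]; ring_nf
  have hsucc : (2 : ℝ) ^ (j + 1) = 2 * 2 ^ j := pow_succ' 2 j
  set N : ℝ := 2 ^ j
  have hN : 1 ≤ N := one_le_pow₀ one_le_two
  have hA := rpow_half_mul_min_le hN (sub_nonneg.2 h₁₂) hγ₀ hγ₁ hδγ
  have hB := mul_rpow_half_mul_le hN (sub_nonneg.2 h₁₂) (by linarith) hC hα hγ₁ hδα
  refine (sum_abs_integral_mul_haarPsi_le_add hcont hgb hM hg hC j ht₁ h₁₂ ht₂).trans ?_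
  rw [hhalf, hdecay, hsucc]
  linarith [mul_le_mul_of_nonneg_left hA hM]

end LevelSum

lemma exists_sum_sqrt_mul_two_rpow_le {δ : ℝ} (hδ : 0 < δ) :
    ∃ K, 0 ≤ K ∧ ∀ J Q : ℕ,
      ∑ i ∈ Finset.range Q, √(1 + ((J + 1 + i : ℕ) : ℝ)) * 2 ^ (-((J + 1 + i : ℕ) : ℝ) * δ) ≤
        K * (√(1 + (J : ℝ)) * 2 ^ (-(J : ℝ) * δ)) := by
  set r : ℝ := 2 ^ (-δ)
  have hr₀ : 0 < r := Real.rpow_pos_of_pos two_pos _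
  have hr₁ : r < 1 := Real.rpow_lt_one_of_one_lt_of_neg one_lt_two (neg_neg_of_pos hδ)
  have hsum : Summable fun i : ℕ => (2 + (i : ℝ)) * r ^ i := by
    have h₁ := (summable_geometric_of_lt_one hr₀.le hr₁).mul_left 2
    have h₂ := summable_pow_mul_geometric_of_norm_lt_one 1 (by rwa [Real.norm_of_nonneg hr₀.le])
    simpa [add_mul, mul_assoc] using h₁.add h₂
  refine ⟨∑' i : ℕ, (2 + (i : ℝ)) * r ^ i, tsum_nonneg fun i => by positivity, fun J Q => ?_⟩
  have hterm : ∀ i : ℕ, √(1 + ((J + 1 + i : ℕ) : ℝ)) * 2 ^ (-((J + 1 + i : ℕ) : ℝ) * δ) ≤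
      √(1 + (J : ℝ)) * 2 ^ (-(J : ℝ) * δ) * ((2 + (i : ℝ)) * r ^ i) := by
    intro i
    have hsqrt : √(1 + ((J + 1 + i : ℕ) : ℝ)) ≤ √(1 + (J : ℝ)) * (2 + i) := by
      rw [← Real.sqrt_sq (by positivity : (0 : ℝ) ≤ 2 + i), ← Real.sqrt_mul (by positivity)]
      refine Real.sqrt_le_sqrt ?_
      push_cast
      have hJ : (0 : ℝ) ≤ J := J.cast_nonneg
      have hi : (0 : ℝ) ≤ i := i.cast_nonneg
      nlinarith [mul_nonneg hJ hi, mul_nonneg hJ (sq_nonneg (i : ℝ))]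
    have hdecay : (2 : ℝ) ^ (-((J + 1 + i : ℕ) : ℝ) * δ) ≤ 2 ^ (-(J : ℝ) * δ) * r ^ i := by
      rw [← Real.rpow_natCast r, ← Real.rpow_mul zero_le_two, ← Real.rpow_add two_pos]
      refine Real.rpow_le_rpow_of_exponent_le one_le_two ?_
      push_cast
      linarith
    calc _ ≤ √(1 + (J : ℝ)) * (2 + i) * (2 ^ (-(J : ℝ) * δ) * r ^ i) :=
          mul_le_mul hsqrt hdecay (by positivity) (by positivity)
      _ = _ := by ring
  calc _ ≤ ∑ i ∈ Finset.range Q, √(1 + (J : ℝ)) * 2 ^ (-(J : ℝ) * δ) * ((2 + (i : ℝ)) * r ^ i) :=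
        Finset.sum_le_sum fun i _ => hterm i
    _ = √(1 + (J : ℝ)) * 2 ^ (-(J : ℝ) * δ) * ∑ i ∈ Finset.range Q, (2 + (i : ℝ)) * r ^ i := by
        rw [Finset.mul_sum]
    _ ≤ √(1 + (J : ℝ)) * 2 ^ (-(J : ℝ) * δ) * ∑' i : ℕ, (2 + (i : ℝ)) * r ^ i := by
        gcongr
        exact hsum.sum_le_tsum _ fun i _ => by positivity
    _ = _ := mul_comm _ _

section PartialSums

variable {g : ℝ → ℝ} {lam00 : ℝ} {lam : ℕ → ℕ → ℝ} {t₁ t₂ : ℝ}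

lemma haarPartialSum_add_sub (g : ℝ → ℝ) (lam00 : ℝ) (lam : ℕ → ℕ → ℝ) (J Q : ℕ) (t : ℝ) :
    haarPartialSum g lam00 lam (J + Q) t - haarPartialSum g lam00 lam J t =
      ∑ i ∈ Finset.range Q, ∑ k ∈ Finset.range (2 ^ (J + 1 + i)),
        lam (J + 1 + i) k * ∫ s in (0 : ℝ)..t, g s * haarPsi (J + 1 + i) k s := by
  rw [haarPartialSum, haarPartialSum, add_sub_add_left_eq_sub, Nat.add_right_comm,
    Finset.sum_range_add_sub_sum_range]

lemma haarPartialSum_increment (hcont : ContinuousOn g (Icc 0 1)) (J Q : ℕ)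
    (ht₁ : t₁ ∈ Icc (0 : ℝ) 1) (ht₂ : t₂ ∈ Icc (0 : ℝ) 1) :
    (haarPartialSum g lam00 lam (J + Q) t₂ - haarPartialSum g lam00 lam J t₂) -
        (haarPartialSum g lam00 lam (J + Q) t₁ - haarPartialSum g lam00 lam J t₁) =
      ∑ i ∈ Finset.range Q, ∑ k ∈ Finset.range (2 ^ (J + 1 + i)),
        lam (J + 1 + i) k * ∫ s in t₁..t₂, g s * haarPsi (J + 1 + i) k s := by
  have h₀ : (0 : ℝ) ∈ Icc (0 : ℝ) 1 := ⟨le_rfl, zero_le_one⟩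
  simp only [haarPartialSum_add_sub, ← Finset.sum_sub_distrib, ← mul_sub]
  refine Finset.sum_congr rfl fun i _ => Finset.sum_congr rfl fun k _ => ?_
  rw [intervalIntegral.integral_interval_sub_left
    (intervalIntegrable_mul_haarPsi hcont _ k h₀ ht₂)
    (intervalIntegrable_mul_haarPsi hcont _ k h₀ ht₁)]

lemma abs_sum_sum_mul_integral_le {Cstar A K δ : ℝ} {J Q : ℕ} (hCstar : 0 ≤ Cstar) (hA : 0 ≤ A)
    (hlam : ∀ j k : ℕ, k < 2 ^ j → |lam j k| ≤ Cstar * √(1 + (j : ℝ)))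
    (hlevel : ∀ j : ℕ, ∑ k ∈ Finset.range (2 ^ j), |∫ s in t₁..t₂, g s * haarPsi j k s| ≤
      A * 2 ^ (-(j : ℝ) * δ))
    (htail : ∑ i ∈ Finset.range Q,
        √(1 + ((J + 1 + i : ℕ) : ℝ)) * 2 ^ (-((J + 1 + i : ℕ) : ℝ) * δ) ≤
      K * (√(1 + (J : ℝ)) * 2 ^ (-(J : ℝ) * δ))) :
    |∑ i ∈ Finset.range Q, ∑ k ∈ Finset.range (2 ^ (J + 1 + i)),
        lam (J + 1 + i) k * ∫ s in t₁..t₂, g s * haarPsi (J + 1 + i) k s| ≤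
      Cstar * A * K * (√(1 + (J : ℝ)) * 2 ^ (-(J : ℝ) * δ)) := by
  have hlevel' : ∀ j : ℕ,
      |∑ k ∈ Finset.range (2 ^ j), lam j k * ∫ s in t₁..t₂, g s * haarPsi j k s| ≤
        Cstar * A * (√(1 + (j : ℝ)) * 2 ^ (-(j : ℝ) * δ)) := by
    intro j
    calc _ ≤ ∑ k ∈ Finset.range (2 ^ j), Cstar * √(1 + (j : ℝ)) *
            |∫ s in t₁..t₂, g s * haarPsi j k s| := by
          refine (Finset.abs_sum_le_sum_abs _ _).trans (Finset.sum_le_sum fun k hk => ?_)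
          rw [abs_mul]
          exact mul_le_mul_of_nonneg_right (hlam j k (Finset.mem_range.1 hk)) (abs_nonneg _)
      _ ≤ Cstar * √(1 + (j : ℝ)) * (A * 2 ^ (-(j : ℝ) * δ)) := by
          rw [← Finset.mul_sum]
          gcongr
          exact hlevel j
      _ = _ := by ring
  calc _ ≤ ∑ i ∈ Finset.range Q, Cstar * A *
          (√(1 + ((J + 1 + i : ℕ) : ℝ)) * 2 ^ (-((J + 1 + i : ℕ) : ℝ) * δ)) :=
        (Finset.abs_sum_le_sum_abs _ _).trans (Finset.sum_le_sum fun i _ => hlevel' _)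
    _ ≤ Cstar * A * (K * (√(1 + (J : ℝ)) * 2 ^ (-(J : ℝ) * δ))) := by
        rw [← Finset.mul_sum]
        gcongr
    _ = _ := by ring

end PartialSums

lemma holderNorm_le_two_mul {γ B : ℝ} {u : ℝ → ℝ} (hγ : 0 ≤ γ) (hB : 0 ≤ B) (hu₀ : u 0 = 0)
    (hu : ∀ t₁ t₂ : ℝ, 0 ≤ t₁ → t₁ < t₂ → t₂ ≤ 1 → |u t₂ - u t₁| ≤ B * (t₂ - t₁) ^ γ) :
    holderNorm γ u ≤ 2 * B := by
  have hsup : sSup ((fun t => |u t|) '' Icc (0 : ℝ) 1) ≤ B := by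
    refine Real.sSup_le ?_ hB
    rintro _ ⟨t, ht, rfl⟩
    rcases ht.1.eq_or_lt with rfl | ht₀
    · simpa [hu₀] using hB
    calc |u t| = |u t - u 0| := by rw [hu₀, sub_zero]
      _ ≤ B * (t - 0) ^ γ := hu 0 t le_rfl ht₀ ht.2
      _ ≤ B * 1 := by
          gcongr
          rw [sub_zero]
          exact Real.rpow_le_one ht.1 ht.2 hγ
      _ = B := mul_one B
  have hosc : sSup {q : ℝ | ∃ t₁ t₂ : ℝ, 0 ≤ t₁ ∧ t₁ < t₂ ∧ t₂ ≤ 1 ∧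
      q = |u t₁ - u t₂| / (t₂ - t₁) ^ γ} ≤ B := by
    refine Real.sSup_le ?_ hB
    rintro _ ⟨t₁, t₂, h₁, h₁₂, h₂, rfl⟩
    rw [div_le_iff₀ (Real.rpow_pos_of_pos (sub_pos.2 h₁₂) γ), abs_sub_comm]
    exact hu t₁ t₂ h₁ h₁₂ h₂
  rw [holderNorm, two_mul]
  exact add_le_add hsup hosc

theorem statement12_general (γ : ℝ) (hγ0 : 0 ≤ γ) (hγ : γ < 1 / 2)
    (α : ℝ) (hα0 : 1 / 2 < α)
    (M Cg Cstar : ℝ) (hM : 0 ≤ M) (hCg : 0 ≤ Cg) (hCstar : 0 ≤ Cstar)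
    (g : ℝ → ℝ) (hgb : ∀ s ∈ Set.Icc (0 : ℝ) 1, |g s| ≤ M)
    (hg : ∀ s₁ ∈ Set.Icc (0 : ℝ) 1, ∀ s₂ ∈ Set.Icc (0 : ℝ) 1,
      |g s₁ - g s₂| ≤ Cg * |s₁ - s₂| ^ α)
    (lam00 : ℝ)
    (lam : ℕ → ℕ → ℝ)
    (hlam : ∀ j k : ℕ, k < 2 ^ j → |lam j k| ≤ Cstar * Real.sqrt (1 + (j : ℝ))) :
    ∃ D : ℝ, 0 < D ∧
      ∀ J Q : ℕ, 1 ≤ Q →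
        holderNorm γ
            (fun t => haarPartialSum g lam00 lam (J + Q) t -
              haarPartialSum g lam00 lam J t) ≤
          D * 2 ^ (-(J : ℝ) * min (1 / 2 - γ) (α - 1 / 2)) *
            Real.sqrt (1 + (J : ℝ)) := by
  have hcont : ContinuousOn g (Icc 0 1) := continuousOn_of_abs_sub_le_rpow (by linarith) hg
  set δ := min (1 / 2 - γ) (α - 1 / 2)
  have hδ : 0 < δ := lt_min (by linarith) (by linarith)
  obtain ⟨K, hK, htail⟩ := exists_sum_sqrt_mul_two_rpow_le hδ
  set C' := Cstar * (2 * M + Cg) * K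
  have hC' : 0 ≤ C' := by positivity
  refine ⟨2 * C' + 1, by linarith, fun J Q _ => ?_⟩
  have hdecay : 0 ≤ √(1 + (J : ℝ)) * 2 ^ (-(J : ℝ) * δ) := by positivity
  refine (holderNorm_le_two_mul hγ0 (mul_nonneg hC' hdecay) (by simp [haarPartialSum])
    fun t₁ t₂ h₁ h₁₂ h₂ => ?_).trans (by nlinarith)
  have hlevel := fun j => sum_abs_integral_mul_haarPsi_le hcont hgb hM hg hCg (by linarith) hγ0
    (by linarith) (min_le_left _ _) (min_le_right _ _) j h₁ h₁₂.le h₂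
  rw [haarPartialSum_increment hcont J Q ⟨h₁, by linarith⟩ ⟨by linarith, h₂⟩]
  calc _ ≤ Cstar * ((2 * M + Cg) * (t₂ - t₁) ^ γ) * K * (√(1 + (J : ℝ)) * 2 ^ (-(J : ℝ) * δ)) :=
        abs_sum_sum_mul_integral_le hCstar (by positivity) hlam hlevel (htail J Q)
    _ = _ := by ring

/-- Cauchy-type estimate for the Haar partial sums: under the stated bounds on
`g` and the coefficients `λ`, there is a constant `D > 0` (depending only on `M, C_g, C*, γ, α`)
with `‖S_{J+Q} − S_J‖_{C^γ} ≤ D 2^{−J min(1/2−γ, α−1/2)} √(1+J)` for all `J` and `Q ≥ 1`. -/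
theorem statement12 (γ : ℝ) (hγ0 : 0 ≤ γ) (hγ : γ < 1 / 2)
    (α : ℝ) (hα0 : 1 / 2 < α) (hα1 : α ≤ 1)
    (M Cg Cstar : ℝ) (hM : 0 ≤ M) (hCg : 0 ≤ Cg) (hCstar : 0 ≤ Cstar)
    (g : ℝ → ℝ) (hgb : ∀ s ∈ Set.Icc (0 : ℝ) 1, |g s| ≤ M)
    (hg : ∀ s₁ ∈ Set.Icc (0 : ℝ) 1, ∀ s₂ ∈ Set.Icc (0 : ℝ) 1,
      |g s₁ - g s₂| ≤ Cg * |s₁ - s₂| ^ α)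
    (lam00 : ℝ) (hlam00 : |lam00| ≤ Cstar)
    (lam : ℕ → ℕ → ℝ)
    (hlam : ∀ j k : ℕ, k < 2 ^ j → |lam j k| ≤ Cstar * Real.sqrt (1 + (j : ℝ))) :
    ∃ D : ℝ, 0 < D ∧
      ∀ J Q : ℕ, 1 ≤ Q →
        holderNorm γ
            (fun t => haarPartialSum g lam00 lam (J + Q) t -
              haarPartialSum g lam00 lam J t) ≤
          D * 2 ^ (-(J : ℝ) * min (1 / 2 - γ) (α - 1 / 2)) *
            Real.sqrt (1 + (J : ℝ)) :=
  statement12_general γ hγ0 hγ α hα0 M Cg Cstar hM hCg hCstar g hgb hg lam00 lam hlam
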